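/- arXiv:1408.0498 — 4 statements merged into one kernel-verified Lean document; each statement's English description precedes it below -/
import Mathlib

section
/- In the diagonal train construction, for every j ≥ 1 the following hold. On the engine: |a_{n,p_j}/b_{n,p_j}|^{(−1)^{j+1}} ≥ 1 and |a_{q_j,n}/b_{q_j,n}|^{(−1)^{j+1}} ≥ 1 for all p_j ≤ n ≤ q_j, and D^{−k^j}/C ≥ |a_{q_j,p_j}/b_{q_j,p_j}|^{(−1)^{j+1}} ≥ D^{−k^j}. Moreover, for every j ≥ 0 and all q_j ≤ m ≤ n ≤ p_{j+1}: |a_{n,m}/b_{n,m}|^{(−1)^{j+1}} > D^{k^{j+1}}, and |a_{p_{j+1},q_j}/b_{p_{j+1},q_j}|^{(−1)^{j+1}} ≥ 1. -/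
open Set Filter Metric Topology

noncomputable section

/-- `absProd a m n = |a_{n,m}| = |a_{n-1}| ⋯ |a_m|`. -/
def absProd (a : ℕ → ℂ) (m n : ℕ) : ℝ :=
  ∏ i ∈ Finset.Ico m n, ‖a i‖

/-- `trainRatio a b j m n = |a_{n,m}/b_{n,m}| ^ ((-1)^j)`. -/
def trainRatio (a b : ℕ → ℂ) (j m n : ℕ) : ℝ :=
  (absProd a m n / absProd b m n) ^ ((-1 : ℤ) ^ j)

/-- A pair `(P,Q)` is admissible at stage `j`: `q_j ≤ P ≤ Q` and
`|a_{Q,P}/b_{Q,P}|^{(-1)^j} ≥ D^{-k^{j+1}}`. -/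
def ValidPair (a b : ℕ → ℂ) (D : ℝ) (k : ℕ) (qj j P Q : ℕ) : Prop :=
  qj ≤ P ∧ P ≤ Q ∧ D ^ (-((k : ℤ) ^ (j + 1))) ≤ trainRatio a b j P Q

/-- The recursive definition of the diagonal trains: `p 0 = 0`, `q 0 = 2`; at each stage
`(p (j+1), q (j+1))` is an admissible pair, `q (j+1)` is minimal among admissible pairs,
and `p (j+1)` maximizes the ratio for this choice of `q (j+1)`. -/
def DiagonalTrains (a b : ℕ → ℂ) (D : ℝ) (k : ℕ) (p q : ℕ → ℕ) : Prop :=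
  p 0 = 0 ∧ q 0 = 2 ∧
  ∀ j, ValidPair a b D k (q j) j (p (j + 1)) (q (j + 1)) ∧
    (∀ P Q, ValidPair a b D k (q j) j P Q → q (j + 1) ≤ Q) ∧
    (∀ P, ValidPair a b D k (q j) j P (q (j + 1)) →
      trainRatio a b j P (q (j + 1)) ≤ trainRatio a b j (p (j + 1)) (q (j + 1)))

/-!
Write `r m n` for the stage-`j` ratio `trainRatio a b j m n` and `T = D^{-k^{j+1}} > 1` for the
stage-`j` threshold; `r` is multiplicative along consecutive intervals and one step changes it
by a factor at most `D / C`. Minimality of `q_{j+1}` says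
`r m n < T` on every interval `[m, n]` with `q_j ≤ m ≤ n < q_{j+1}`; maximality of `p_{j+1}` says
`r n q_{j+1} ≤ r p_{j+1} q_{j+1}` for `q_j ≤ n ≤ q_{j+1}`. Splitting intervals at an intermediate
point and comparing with these two bounds gives every estimate; the stage-`(j+1)` ratio is `1 / r`
and the stage-`(j+2)` ratio is `r` again.
-/

theorem absProd_mul_absProd (a : ℕ → ℂ) {m n l : ℕ} (hmn : m ≤ n) (hnl : n ≤ l) :
    absProd a m n * absProd a n l = absProd a m l :=
  Finset.prod_Ico_consecutive _ hmn hnl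

theorem absProd_pos {a : ℕ → ℂ} (ha : ∀ i, a i ≠ 0) (m n : ℕ) : 0 < absProd a m n :=
  Finset.prod_pos fun i _ => norm_pos_iff.mpr (ha i)

theorem trainRatio_mul_trainRatio (a b : ℕ → ℂ) (j : ℕ) {m n l : ℕ} (hmn : m ≤ n) (hnl : n ≤ l) :
    trainRatio a b j m n * trainRatio a b j n l = trainRatio a b j m l := by
  rw [trainRatio, trainRatio, trainRatio, ← mul_zpow, div_mul_div_comm,
    absProd_mul_absProd a hmn hnl, absProd_mul_absProd b hmn hnl]

@[simp]
theorem trainRatio_self (a b : ℕ → ℂ) (j n : ℕ) : trainRatio a b j n n = 1 := by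
  simp [trainRatio, absProd]

theorem trainRatio_pos {a b : ℕ → ℂ} (ha : ∀ i, a i ≠ 0) (hb : ∀ i, b i ≠ 0) (j m n : ℕ) :
    0 < trainRatio a b j m n :=
  zpow_pos (div_pos (absProd_pos ha m n) (absProd_pos hb m n)) _

theorem trainRatio_succ (a b : ℕ → ℂ) (j m n : ℕ) :
    trainRatio a b (j + 1) m n = (trainRatio a b j m n)⁻¹ := by
  rw [trainRatio, trainRatio, pow_succ, zpow_mul, zpow_neg_one]

theorem trainRatio_add_two (a b : ℕ → ℂ) (j m n : ℕ) :
    trainRatio a b (j + 2) m n = trainRatio a b j m n := by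
  rw [trainRatio_succ, trainRatio_succ, inv_inv]

theorem trainRatio_self_succ_le_div {a b : ℕ → ℂ} {C D : ℝ} (j n : ℕ) (hC : 0 < C)
    (hab : C ≤ ‖a n‖ ∧ ‖a n‖ ≤ D ∧ C ≤ ‖b n‖ ∧ ‖b n‖ ≤ D) :
    trainRatio a b j n (n + 1) ≤ D / C := by
  obtain ⟨hCa, haD, hCb, hbD⟩ := hab
  have hD : 0 ≤ D := hC.le.trans (hCa.trans haD)
  simp only [trainRatio, absProd, Nat.Ico_succ_singleton, Finset.prod_singleton]
  rcases Nat.even_or_odd j with hj | hj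
  · rw [hj.neg_one_pow, zpow_one]
    exact div_le_div₀ hD haD hC hCb
  · rw [hj.neg_one_pow, zpow_neg_one, inv_div]
    exact div_le_div₀ hD hbD hC hCa

namespace DiagonalTrains

variable {a b : ℕ → ℂ} {D : ℝ} {k : ℕ} {p q : ℕ → ℕ}

theorem trainRatio_lt_of_lt_q_succ (ht : DiagonalTrains a b D k p q) {j m n : ℕ}
    (hm : q j ≤ m) (hmn : m ≤ n) (hn : n < q (j + 1)) :
    trainRatio a b j m n < D ^ (-((k : ℤ) ^ (j + 1))) := by
  by_contra! h
  exact hn.not_ge ((ht.2.2 j).2.1 m n ⟨hm, hmn, h⟩)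

theorem p_succ_lt_q_succ (ht : DiagonalTrains a b D k p q) {j : ℕ}
    (hT : 1 < D ^ (-((k : ℤ) ^ (j + 1)))) : p (j + 1) < q (j + 1) := by
  obtain ⟨_, hpq, hval⟩ := (ht.2.2 j).1
  refine hpq.lt_of_ne fun h => ?_
  rw [h, trainRatio_self] at hval
  exact hval.not_gt hT

theorem trainRatio_le_trainRatio_p_succ (ht : DiagonalTrains a b D k p q) {j n : ℕ}
    (hn : q j ≤ n) (hnq : n ≤ q (j + 1)) :
    trainRatio a b j n (q (j + 1)) ≤ trainRatio a b j (p (j + 1)) (q (j + 1)) := by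
  obtain ⟨⟨_, _, hval⟩, -, hmax⟩ := ht.2.2 j
  rcases le_or_gt (D ^ (-((k : ℤ) ^ (j + 1)))) (trainRatio a b j n (q (j + 1))) with h | h
  · exact hmax n ⟨hn, hnq, h⟩
  · exact h.le.trans hval

theorem trainRatio_q_p_succ_le_one (ht : DiagonalTrains a b D k p q)
    (ha : ∀ i, a i ≠ 0) (hb : ∀ i, b i ≠ 0) (j : ℕ) :
    trainRatio a b j (q j) (p (j + 1)) ≤ 1 := by
  obtain ⟨hqp, hpq, -⟩ := (ht.2.2 j).1
  have hle := ht.trainRatio_le_trainRatio_p_succ le_rfl (hqp.trans hpq)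
  rw [← trainRatio_mul_trainRatio a b j hqp hpq] at hle
  exact (mul_le_iff_le_one_left (trainRatio_pos ha hb _ _ _)).mp hle

theorem one_le_trainRatio_p_succ (ht : DiagonalTrains a b D k p q)
    (ha : ∀ i, a i ≠ 0) (hb : ∀ i, b i ≠ 0) {j n : ℕ}
    (hpn : p (j + 1) ≤ n) (hnq : n ≤ q (j + 1)) :
    1 ≤ trainRatio a b j (p (j + 1)) n := by
  have hle := ht.trainRatio_le_trainRatio_p_succ ((ht.2.2 j).1.1.trans hpn) hnq
  rw [← trainRatio_mul_trainRatio a b j hpn hnq] at hle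
  exact (le_mul_iff_one_le_left (trainRatio_pos ha hb _ _ _)).mp hle

theorem one_le_trainRatio_q_succ (ht : DiagonalTrains a b D k p q)
    (ha : ∀ i, a i ≠ 0) (hb : ∀ i, b i ≠ 0) {j n : ℕ}
    (hpn : p (j + 1) ≤ n) (hnq : n ≤ q (j + 1)) :
    1 ≤ trainRatio a b j n (q (j + 1)) := by
  obtain ⟨⟨hqp, -, hval⟩, -, -⟩ := ht.2.2 j
  rcases hnq.lt_or_eq with hnq' | rfl
  · by_contra! h
    have hlt := ht.trainRatio_lt_of_lt_q_succ hqp hpn hnq'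
    rw [← trainRatio_mul_trainRatio a b j hpn hnq] at hval
    have hpos := trainRatio_pos ha hb j (p (j + 1)) n
    exact (hval.trans_lt ((mul_lt_of_lt_one_right hpos h).trans hlt)).false
  · rw [trainRatio_self]

theorem trainRatio_p_succ_q_succ_le (ht : DiagonalTrains a b D k p q) {C : ℝ}
    (hC : 0 < C) (hD : D ≤ 1) (hab : ∀ n, C ≤ ‖a n‖ ∧ ‖a n‖ ≤ D ∧ C ≤ ‖b n‖ ∧ ‖b n‖ ≤ D)
    {j : ℕ} (hT : 1 < D ^ (-((k : ℤ) ^ (j + 1)))) :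
    trainRatio a b j (p (j + 1)) (q (j + 1)) ≤ D ^ (-((k : ℤ) ^ (j + 1))) / C := by
  have hpq := ht.p_succ_lt_q_succ hT
  obtain ⟨n, hn⟩ : ∃ n, q (j + 1) = n + 1 := Nat.exists_eq_succ_of_ne_zero (by omega)
  have hpn : p (j + 1) ≤ n := by omega
  have ha i : a i ≠ 0 := norm_pos_iff.mp (hC.trans_le (hab i).1)
  have hb i : b i ≠ 0 := norm_pos_iff.mp (hC.trans_le (hab i).2.2.1)
  rw [hn, ← trainRatio_mul_trainRatio a b j hpn n.le_succ]
  calc trainRatio a b j (p (j + 1)) n * trainRatio a b j n (n + 1)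
      ≤ D ^ (-((k : ℤ) ^ (j + 1))) * (D / C) := by
        gcongr
        · exact (trainRatio_pos ha hb _ _ _).le
        · exact (ht.trainRatio_lt_of_lt_q_succ ((ht.2.2 j).1.1) hpn (by omega)).le
        · exact trainRatio_self_succ_le_div j n hC (hab n)
    _ ≤ D ^ (-((k : ℤ) ^ (j + 1))) * (1 / C) := by gcongr
    _ = D ^ (-((k : ℤ) ^ (j + 1))) / C := mul_one_div _ _

theorem zpow_lt_trainRatio_succ (ht : DiagonalTrains a b D k p q) (hD : 0 < D)
    (ha : ∀ i, a i ≠ 0) (hb : ∀ i, b i ≠ 0) {j m n : ℕ}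
    (hm : q j ≤ m) (hmn : m ≤ n) (hn : n ≤ p (j + 1)) (hT : 1 < D ^ (-((k : ℤ) ^ (j + 1)))) :
    D ^ ((k : ℤ) ^ (j + 1)) < trainRatio a b (j + 1) m n := by
  have hlt := ht.trainRatio_lt_of_lt_q_succ hm hmn (hn.trans_lt (ht.p_succ_lt_q_succ hT))
  rw [zpow_neg] at hlt
  rw [trainRatio_succ]
  exact (lt_inv_comm₀ (trainRatio_pos ha hb _ _ _) (zpow_pos hD _)).mp hlt

end DiagonalTrains

/-- Properties of the diagonal trains: the estimates on the engine `[p_j, q_j]`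
(for `j ≥ 1`) and on the wagons `[q_j, p_{j+1}]` (for all `j ≥ 0`). -/
theorem diagonal_train_properties
    (C D : ℝ) (a b : ℕ → ℂ) (k : ℕ) (p q : ℕ → ℕ)
    (hC : 0 < C) (hCD : C < D) (hD : D < 1) (hk : 2 ≤ k)
    (hab : ∀ n, C ≤ ‖a n‖ ∧ ‖a n‖ ≤ D ∧
      C ≤ ‖b n‖ ∧ ‖b n‖ ≤ D)
    (ht : DiagonalTrains a b D k p q) :
    (∀ j, 1 ≤ j →
      (∀ n, p j ≤ n → n ≤ q j →
        1 ≤ trainRatio a b (j + 1) (p j) n ∧ 1 ≤ trainRatio a b (j + 1) n (q j)) ∧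
      trainRatio a b (j + 1) (p j) (q j) ≤ D ^ (-((k : ℤ) ^ j)) / C ∧
      D ^ (-((k : ℤ) ^ j)) ≤ trainRatio a b (j + 1) (p j) (q j)) ∧
    (∀ j, ∀ m n, q j ≤ m → m ≤ n → n ≤ p (j + 1) →
      D ^ ((k : ℤ) ^ (j + 1)) < trainRatio a b (j + 1) m n) ∧
    (∀ j, 1 ≤ trainRatio a b (j + 1) (q j) (p (j + 1))) := by
  have hD0 : 0 < D := hC.trans hCD
  have ha n : a n ≠ 0 := norm_pos_iff.mp (hC.trans_le (hab n).1)
  have hb n : b n ≠ 0 := norm_pos_iff.mp (hC.trans_le (hab n).2.2.1)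
  have hT j : 1 < D ^ (-((k : ℤ) ^ (j + 1))) :=
    one_lt_zpow_of_neg₀ hD0 hD (neg_neg_of_pos (pow_pos (by omega) _))
  refine ⟨fun j hj => ?_,
    fun j m n hm hmn hn => ht.zpow_lt_trainRatio_succ hD0 ha hb hm hmn hn (hT j), fun j => ?_⟩
  · obtain ⟨i, rfl⟩ := Nat.exists_eq_add_of_le' hj
    simp only [trainRatio_add_two]
    exact ⟨fun n hpn hnq => ⟨ht.one_le_trainRatio_p_succ ha hb hpn hnq,
        ht.one_le_trainRatio_q_succ ha hb hpn hnq⟩,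
      ht.trainRatio_p_succ_q_succ_le hC hD.le hab (hT i), (ht.2.2 i).1.2.2⟩
  · rw [trainRatio_succ]
    exact (one_le_inv₀ (trainRatio_pos ha hb _ _ _)).mpr (ht.trainRatio_q_p_succ_le_one ha hb j)
end
end

section
/- Let 0<C<D<1, x>1, and let p ≤ m ≤ n ≤ q be integers. Let (α_i), (β_i), (γ_i), for p ≤ i < q, be complex numbers with C ≤ |α_i| ≤ D, C ≤ |β_i| ≤ D and |γ_i| ≤ D. For p ≤ s ≤ t ≤ q write α_{t,s} = α_{t−1}·…·α_s and β_{t,s} = β_{t−1}·…·β_s, and set γ_{n,m} = Σ_{i=m}^{n−1} β_{n,i+1} γ_i α_{i,m}. Assume that |α_{i,p}| ≤ |β_{i,p}|^x for all p ≤ i ≤ q. Then |γ_{n,m}| ≤ K₁ · |β_{n,p}| / |α_{m,p}|^{1/x}, where K₁ = D/(C(1 − D^{1−1/x})). -/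
/-!
Write `A i = |α_{i,p}|`, `B i = |β_{i,p}|` and `r = D^{1-1/x} < 1`. The `i`-th term of `γ_{n,m}`
has size `|β_{n,i+1}| |γ_i| A i / A m`. Splitting `A i / A m` into its powers `1/x` and `1 - 1/x`,
the domination `A i ≤ (B i)^x` bounds the first by `B i / (A m)^{1/x}` and `|α_i| ≤ D` bounds the
second by `r^{i-m}`; since `B n ≥ C · B i · |β_{n,i+1}|`, the term is at most
`(D/C) · B n / (A m)^{1/x} · r^{i-m}`, and the geometric series gives the factor `1/(1-r)`.
-/

open Finset

noncomputable section

def K1 (C D x : ℝ) : ℝ := D / (C * (1 - D ^ (1 - 1 / x)))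

lemma div_le_div_rpow_mul_rpow {a a₀ b d x : ℝ} (ha : 0 ≤ a) (ha₀ : 0 < a₀) (hb : 0 ≤ b)
    (hx : 1 ≤ x) (hab : a ≤ b ^ x) (had : a / a₀ ≤ d) :
    a / a₀ ≤ b / a₀ ^ (1 / x) * d ^ (1 - 1 / x) := by
  have hx₀ : 0 < x := one_pos.trans_le hx
  have hu : 0 ≤ a / a₀ := div_nonneg ha ha₀.le
  have hsplit : a / a₀ = (a / a₀) ^ (1 / x) * (a / a₀) ^ (1 - 1 / x) := by
    rw [← Real.rpow_add' hu (by norm_num), add_sub_cancel, Real.rpow_one]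
  have hfirst : (a / a₀) ^ (1 / x) ≤ b / a₀ ^ (1 / x) := by
    rw [Real.div_rpow ha ha₀.le]
    gcongr
    calc a ^ (1 / x) ≤ (b ^ x) ^ (1 / x) := by gcongr
      _ = b := by rw [← Real.rpow_mul hb, mul_one_div_cancel hx₀.ne', Real.rpow_one]
  have hsecond : (a / a₀) ^ (1 - 1 / x) ≤ d ^ (1 - 1 / x) :=
    Real.rpow_le_rpow hu had (sub_nonneg.mpr ((div_le_one hx₀).mpr hx))
  rw [hsplit]
  exact mul_le_mul hfirst hsecond (by positivity) (div_nonneg hb (by positivity))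

lemma sum_Ico_pow_sub_le {r : ℝ} (h₀ : 0 ≤ r) (h₁ : r < 1) (m n : ℕ) :
    ∑ i ∈ Ico m n, r ^ (i - m) ≤ (1 - r)⁻¹ := by
  rw [sum_Ico_eq_sum_range]
  simp only [Nat.add_sub_cancel_left, range_eq_Ico]
  simpa using geom_sum_Ico_le_of_lt_one (m := 0) (n := n - m) h₀ h₁

lemma norm_offdiag_term_le {𝕜 : Type*} [NormedField 𝕜] {C D x : ℝ} {p m i n : ℕ}
    {α β γ : ℕ → 𝕜} (hC : 0 < C) (hx : 1 ≤ x) (hpm : p ≤ m) (hmi : m ≤ i) (hin : i < n)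
    (hAm : 0 < ‖∏ t ∈ Ico p m, α t‖) (hα : ∀ t ∈ Ico m i, ‖α t‖ ≤ D)
    (hβ : C ≤ ‖β i‖) (hγ : ‖γ i‖ ≤ D)
    (hdom : ‖∏ t ∈ Ico p i, α t‖ ≤ ‖∏ t ∈ Ico p i, β t‖ ^ x) :
    ‖(∏ t ∈ Ico (i + 1) n, β t) * γ i * ∏ t ∈ Ico m i, α t‖
      ≤ D / C * (‖∏ t ∈ Ico p n, β t‖ / ‖∏ t ∈ Ico p m, α t‖ ^ (1 / x))
        * (D ^ (1 - 1 / x)) ^ (i - m) := by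
  have hD : 0 ≤ D := (norm_nonneg _).trans hγ
  have hαratio : ‖∏ t ∈ Ico m i, α t‖ = ‖∏ t ∈ Ico p i, α t‖ / ‖∏ t ∈ Ico p m, α t‖ := by
    rw [eq_div_iff hAm.ne', ← norm_mul, mul_comm, prod_Ico_consecutive α hpm hmi]
  have hαpow : ‖∏ t ∈ Ico m i, α t‖ ≤ D ^ (i - m) := by
    rw [norm_prod, ← Nat.card_Ico, ← prod_const]
    exact prod_le_prod (fun _ _ ↦ norm_nonneg _) hα
  have hinterp := div_le_div_rpow_mul_rpow (norm_nonneg _) hAm (norm_nonneg _) hx hdom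
    (hαratio ▸ hαpow)
  rw [← Real.rpow_pow_comm hD, ← hαratio] at hinterp
  have hBn : ‖∏ t ∈ Ico p n, β t‖
      = ‖∏ t ∈ Ico p i, β t‖ * ‖β i‖ * ‖∏ t ∈ Ico (i + 1) n, β t‖ := by
    rw [← prod_Ico_consecutive β ((hpm.trans hmi).trans i.le_succ) hin,
      prod_Ico_succ_top (hpm.trans hmi), norm_mul, norm_mul]
  set N := ‖∏ t ∈ Ico (i + 1) n, β t‖
  set Bi := ‖∏ t ∈ Ico p i, β t‖
  set Amx := ‖∏ t ∈ Ico p m, α t‖ ^ (1 / x)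
  set r := (D ^ (1 - 1 / x)) ^ (i - m)
  calc _ = N * ‖γ i‖ * ‖∏ t ∈ Ico m i, α t‖ := by rw [norm_mul, norm_mul]
    _ ≤ N * D * (Bi / Amx * r) := by gcongr
    _ = D / C * (Bi * C * N / Amx) * r := by field_simp
    _ ≤ D / C * (Bi * ‖β i‖ * N / Amx) * r := by gcongr
    _ = _ := by rw [hBn]

/-- Estimate for the off-diagonal entries: if `C ≤ |αᵢ|, |βᵢ| ≤ D`, `|γᵢ| ≤ D`, and
`|α_{i,p}| ≤ |β_{i,p}|^x` for all `p ≤ i ≤ q`, then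
`|γ_{n,m}| ≤ K₁ |β_{n,p}| / |α_{m,p}|^{1/x}` for `p ≤ m ≤ n ≤ q`. -/
theorem offdiagonal_estimate
    (C D x : ℝ) (p m n q : ℕ) (α β γ : ℕ → ℂ)
    (hC : 0 < C) (hCD : C < D) (hD : D < 1) (hx : 1 < x)
    (hpm : p ≤ m) (hmn : m ≤ n) (hnq : n ≤ q)
    (hα : ∀ i, p ≤ i → i < q → C ≤ ‖α i‖ ∧ ‖α i‖ ≤ D)
    (hβ : ∀ i, p ≤ i → i < q → C ≤ ‖β i‖ ∧ ‖β i‖ ≤ D)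
    (hγ : ∀ i, p ≤ i → i < q → ‖γ i‖ ≤ D)
    (hdom : ∀ i, p ≤ i → i ≤ q →
      ‖∏ t ∈ Finset.Ico p i, α t‖
        ≤ ‖∏ t ∈ Finset.Ico p i, β t‖ ^ x) :
    ‖∑ i ∈ Finset.Ico m n,
        (∏ t ∈ Finset.Ico (i + 1) n, β t) * γ i * ∏ t ∈ Finset.Ico m i, α t‖
      ≤ K1 C D x * ‖∏ t ∈ Finset.Ico p n, β t‖
          / ‖∏ t ∈ Finset.Ico p m, α t‖ ^ (1 / x) := by
  have hD₀ : 0 < D := hC.trans hCD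
  have hr₁ : D ^ (1 - 1 / x) < 1 :=
    Real.rpow_lt_one hD₀.le hD (sub_pos.mpr ((div_lt_one (one_pos.trans hx)).mpr hx))
  have hAm : 0 < ‖∏ t ∈ Ico p m, α t‖ := by
    rw [norm_prod]
    exact prod_pos fun t ht ↦ hC.trans_le (hα t (mem_Ico.mp ht).1 (by grind)).1
  set c := D / C * (‖∏ t ∈ Ico p n, β t‖ / ‖∏ t ∈ Ico p m, α t‖ ^ (1 / x)) with hc
  calc _ ≤ ∑ i ∈ Ico m n, ‖(∏ t ∈ Ico (i + 1) n, β t) * γ i * ∏ t ∈ Ico m i, α t‖ :=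
        norm_sum_le _ _
    _ ≤ ∑ i ∈ Ico m n, c * (D ^ (1 - 1 / x)) ^ (i - m) := by
        refine sum_le_sum fun i hi ↦ ?_
        obtain ⟨hmi, hin⟩ := mem_Ico.mp hi
        exact norm_offdiag_term_le hC hx.le hpm hmi hin hAm
          (fun t ht ↦ (hα t (by grind) (by grind)).2) (hβ i (by omega) (by omega)).1
          (hγ i (by omega) (by omega)) (hdom i (by omega) (by omega))
    _ = c * ∑ i ∈ Ico m n, (D ^ (1 - 1 / x)) ^ (i - m) := (mul_sum _ _ _).symm
    _ ≤ c * (1 - D ^ (1 - 1 / x))⁻¹ := by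
        gcongr
        exact sum_Ico_pow_sub_le (by positivity) hr₁ m n
    _ = _ := by
        rw [K1, hc, mul_div_assoc, ← div_div]
        ring
end
end

section
/- Let 0<C<D<1, 2<k<11/5 with D^k<C, ε ∈ (0, min{(11−5k)/4, (5−2k)/3, (3−k)/2}), Z > 0, and λ ∈ (0,1) with D^k < λC. For n ≥ 0 set r_n = min{ (1−λ)C²·D^{2n(k−2+ε)}/(2Z), D^{2n(k−2+ε)}/(48Z), D^{4n(k−2+ε)/(3−k)}/2 }. Let g(z₁,z₂) = L(z₁,z₂) + (0, d·z₁²), where L is an invertible lower triangular 2×2 complex matrix whose diagonal entries a, b satisfy |a|, |b| ≥ C and ‖L^{−1}‖ ≤ 1/C, and d ∈ ℂ with |d| ≤ Z·D^{−2n(k−2+ε)}. Then for all z, w in the ball B(0, r_n) one has ‖g^{−1}(z) − g^{−1}(w)‖ ≤ (1/(λC))·‖z − w‖, and the same estimate holds for g∘M with M a unitary matrix. -/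
/-!
Write `g = L + q` with `q(u) = (0, d u₁²)`. Since `‖L⁻¹‖ ≤ 1/C`, `L` expands distances by at
least `C`, while `‖q u - q v‖ ≤ ‖d‖ (‖u₁‖ + ‖v₁‖) ‖u - v‖`. The first coordinate of `g` is
`a u₁`, so the preimages of the ball `B(0, r_n)` have `‖u₁‖ < r_n / C`, and the first term of
`r_n` together with the bound on `‖d‖` makes the Lipschitz constant of `q` there at most
`(1 - λ) C`. Hence `g` expands distances by at least `λ C` on those preimages.
-/

open Set Filter Metric Topology

noncomputable section

/-- The radius `r_n = min{(1-λ)C²D^{2n(k-2+ε)}/(2Z), D^{2n(k-2+ε)}/(48Z),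
D^{4n(k-2+ε)/(3-k)}/2}`. -/
def rSeq (C D k ε Z lam : ℝ) (n : ℕ) : ℝ :=
  min (min ((1 - lam) * C ^ 2 * D ^ (2 * (n : ℝ) * (k - 2 + ε)) / (2 * Z))
        (D ^ (2 * (n : ℝ) * (k - 2 + ε)) / (48 * Z)))
      (D ^ (4 * (n : ℝ) * (k - 2 + ε) / (3 - k)) / 2)

/-- The map `g(z,w) = (a z, b w + c z + d z²)`. -/
def gMap (a b c d : ℂ) (z : ℂ × ℂ) : ℂ × ℂ :=
  (a * z.1, b * z.2 + c * z.1 + d * z.1 ^ 2)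

/-- A homogeneous quadratic map of ℂ² with coefficient vector `cf`. -/
def quadMap (cf : Fin 6 → ℂ) (z : ℂ × ℂ) : ℂ × ℂ :=
  (cf 0 * z.1 ^ 2 + cf 1 * z.1 * z.2 + cf 2 * z.2 ^ 2,
   cf 3 * z.1 ^ 2 + cf 4 * z.1 * z.2 + cf 5 * z.2 ^ 2)

theorem mul_norm_sub_le_norm_add_sub {E F : Type*} [SeminormedAddCommGroup E]
    [SeminormedAddCommGroup F] {f h : E → F} {C K : ℝ} {x y : E}
    (hf : C * ‖x - y‖ ≤ ‖f x - f y‖) (hh : ‖h x - h y‖ ≤ K * ‖x - y‖) :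
    (C - K) * ‖x - y‖ ≤ ‖(f x + h x) - (f y + h y)‖ := by
  have htri : ‖f x - f y‖ ≤ ‖(f x + h x) - (f y + h y)‖ + ‖h x - h y‖ := by
    have hsplit : f x - f y = ((f x + h x) - (f y + h y)) - (h x - h y) := by abel
    exact hsplit ▸ norm_sub_le _ _
  linarith

theorem norm_sq_sub_sq_le {R : Type*} [SeminormedCommRing R] (x y : R) :
    ‖x ^ 2 - y ^ 2‖ ≤ (‖x‖ + ‖y‖) * ‖x - y‖ := by
  rw [sq_sub_sq]
  exact (norm_mul_le _ _).trans (by gcongr; exact norm_add_le x y)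

theorem norm_mul_rSeq_le {C D k ε Z lam : ℝ} {n : ℕ} {d : ℂ} (hD : 0 < D) (hZ : 0 < Z)
    (hlam : lam ≤ 1) (hd : ‖d‖ ≤ Z * D ^ (-(2 * (n : ℝ)) * (k - 2 + ε))) :
    ‖d‖ * rSeq C D k ε Z lam n ≤ (1 - lam) * C ^ 2 / 2 := by
  set e : ℝ := 2 * (n : ℝ) * (k - 2 + ε)
  have hDe : 0 < D ^ e := Real.rpow_pos_of_pos hD e
  have hd' : ‖d‖ ≤ Z / D ^ e := by
    rwa [div_eq_mul_inv, ← Real.rpow_neg hD.le, ← neg_mul]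
  have hr : rSeq C D k ε Z lam n ≤ (1 - lam) * C ^ 2 * D ^ e / (2 * Z) :=
    (min_le_left _ _).trans (min_le_left _ _)
  have hlam' : 0 ≤ 1 - lam := by linarith
  calc ‖d‖ * rSeq C D k ε Z lam n ≤ ‖d‖ * ((1 - lam) * C ^ 2 * D ^ e / (2 * Z)) := by gcongr
    _ ≤ Z / D ^ e * ((1 - lam) * C ^ 2 * D ^ e / (2 * Z)) := by gcongr
    _ = (1 - lam) * C ^ 2 / 2 := by field_simp

namespace LowerShear

variable {a b c d : ℂ}

def linearPart (a b c : ℂ) (z : ℂ × ℂ) : ℂ × ℂ := (a * z.1, c * z.1 + b * z.2)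

def quadPart (d : ℂ) (z : ℂ × ℂ) : ℂ × ℂ := (0, d * z.1 ^ 2)

-- Written as in the hypothesis `hG` of the main theorem (not as `gMap`), so that `hG` applies
-- to it by unfolding.
def map (a b c d : ℂ) (z : ℂ × ℂ) : ℂ × ℂ := (a * z.1, c * z.1 + b * z.2 + d * z.1 ^ 2)

theorem map_eq_add (z : ℂ × ℂ) : map a b c d z = linearPart a b c z + quadPart d z := by
  ext <;> simp [map, linearPart, quadPart]

theorem linearPart_sub (u v : ℂ × ℂ) :
    linearPart a b c u - linearPart a b c v = linearPart a b c (u - v) := by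
  ext <;> simp only [linearPart, Prod.fst_sub, Prod.snd_sub] <;> ring

theorem norm_quadPart_sub_le (u v : ℂ × ℂ) :
    ‖quadPart d u - quadPart d v‖ ≤ ‖d‖ * (‖u.1‖ + ‖v.1‖) * ‖u - v‖ := by
  have hsnd : (quadPart d u - quadPart d v).2 = d * (u.1 ^ 2 - v.1 ^ 2) := by
    simp only [quadPart, Prod.snd_sub]; ring
  calc ‖quadPart d u - quadPart d v‖ = ‖d * (u.1 ^ 2 - v.1 ^ 2)‖ := by
        rw [Prod.norm_def, ← hsnd]; simp [quadPart]
    _ ≤ ‖d‖ * ((‖u.1‖ + ‖v.1‖) * ‖u.1 - v.1‖) :=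
        (norm_mul_le _ _).trans (by gcongr; exact norm_sq_sub_sq_le _ _)
    _ ≤ ‖d‖ * (‖u.1‖ + ‖v.1‖) * ‖u - v‖ := by
        rw [← mul_assoc]; gcongr; exact norm_fst_le (u - v)

theorem mul_norm_sub_le_norm_map_sub {C lam : ℝ} (hC : 0 < C)
    (hLinv : ∀ z : ℂ × ℂ, ‖z‖ ≤ 1 / C * ‖linearPart a b c z‖) {u v : ℂ × ℂ}
    (hd : ‖d‖ * (‖u.1‖ + ‖v.1‖) ≤ (1 - lam) * C) :
    lam * C * ‖u - v‖ ≤ ‖map a b c d u - map a b c d v‖ := by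
  have hL : C * ‖u - v‖ ≤ ‖linearPart a b c u - linearPart a b c v‖ := by
    rw [linearPart_sub]
    have := hLinv (u - v)
    rw [one_div, inv_mul_eq_div, le_div_iff₀ hC] at this
    linarith
  have hexp := mul_norm_sub_le_norm_add_sub hL (norm_quadPart_sub_le (d := d) u v)
  rw [map_eq_add, map_eq_add]
  nlinarith [norm_nonneg (u - v)]

theorem mul_norm_fst_le {C : ℝ} (ha : C ≤ ‖a‖) (u : ℂ × ℂ) :
    C * ‖u.1‖ ≤ ‖map a b c d u‖ :=
  calc C * ‖u.1‖ ≤ ‖a‖ * ‖u.1‖ := by gcongr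
    _ = ‖(map a b c d u).1‖ := (norm_mul _ _).symm
    _ ≤ ‖map a b c d u‖ := norm_fst_le _

theorem mul_norm_sub_le_of_lt_rSeq {C D k ε Z lam : ℝ} {n : ℕ} (hC : 0 < C) (hD : 0 < D)
    (hZ : 0 < Z) (hlam : lam ≤ 1) (ha : C ≤ ‖a‖)
    (hLinv : ∀ z : ℂ × ℂ, ‖z‖ ≤ 1 / C * ‖linearPart a b c z‖)
    (hd : ‖d‖ ≤ Z * D ^ (-(2 * (n : ℝ)) * (k - 2 + ε))) {u v : ℂ × ℂ}
    (hu : ‖map a b c d u‖ < rSeq C D k ε Z lam n) (hv : ‖map a b c d v‖ < rSeq C D k ε Z lam n) :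
    lam * C * ‖u - v‖ ≤ ‖map a b c d u - map a b c d v‖ := by
  have hu1 := mul_norm_fst_le (b := b) (c := c) (d := d) ha u
  have hv1 := mul_norm_fst_le (b := b) (c := c) (d := d) ha v
  have hdr := norm_mul_rSeq_le (C := C) hD hZ hlam hd
  have hsmall : ‖d‖ * (‖u.1‖ + ‖v.1‖) ≤ (1 - lam) * C := by
    refine le_of_mul_le_mul_left ?_ hC
    calc C * (‖d‖ * (‖u.1‖ + ‖v.1‖)) = ‖d‖ * (C * ‖u.1‖ + C * ‖v.1‖) := by ring
      _ ≤ ‖d‖ * (2 * rSeq C D k ε Z lam n) := by gcongr; linarith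
      _ = 2 * (‖d‖ * rSeq C D k ε Z lam n) := by ring
      _ ≤ C * ((1 - lam) * C) := by linarith
  exact mul_norm_sub_le_norm_map_sub hC hLinv hsmall

end LowerShear

theorem inverse_lipschitz_estimate_general
    (C D k ε Z lam : ℝ) (n : ℕ) (a b c d : ℂ) (G : ℂ × ℂ → ℂ × ℂ)
    (hC : 0 < C) (hCD : C < D)
    (hZ : 0 < Z) (hlam : 0 < lam ∧ lam < 1)
    (ha : C ≤ ‖a‖)
    -- `‖L⁻¹‖ ≤ 1/C`:
    (hLinv : ∀ z : ℂ × ℂ, ‖z‖ ≤ 1 / C * ‖((a * z.1, c * z.1 + b * z.2) : ℂ × ℂ)‖)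
    (hd : ‖d‖ ≤ Z * D ^ (-(2 * (n : ℝ)) * (k - 2 + ε)))
    -- `G` is the inverse of `g`:
    (hG : Function.LeftInverse G (fun z : ℂ × ℂ => (a * z.1, c * z.1 + b * z.2 + d * z.1 ^ 2))
        ∧ Function.RightInverse G (fun z : ℂ × ℂ => (a * z.1, c * z.1 + b * z.2 + d * z.1 ^ 2))) :
    (∀ z w : ℂ × ℂ, ‖z‖ < rSeq C D k ε Z lam n → ‖w‖ < rSeq C D k ε Z lam n →
      ‖G z - G w‖ ≤ 1 / (lam * C) * ‖z - w‖) ∧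
    ∀ M : (ℂ × ℂ) ≃ₗᵢ[ℂ] (ℂ × ℂ), ∀ z w : ℂ × ℂ,
      ‖z‖ < rSeq C D k ε Z lam n → ‖w‖ < rSeq C D k ε Z lam n →
        ‖M.symm (G z) - M.symm (G w)‖ ≤ 1 / (lam * C) * ‖z - w‖ := by
  have hmain : ∀ z w : ℂ × ℂ, ‖z‖ < rSeq C D k ε Z lam n → ‖w‖ < rSeq C D k ε Z lam n →
      ‖G z - G w‖ ≤ 1 / (lam * C) * ‖z - w‖ := by
    intro z w hz hw
    have hGz : LowerShear.map a b c d (G z) = z := hG.2 z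
    have hGw : LowerShear.map a b c d (G w) = w := hG.2 w
    have hexp := LowerShear.mul_norm_sub_le_of_lt_rSeq hC (hC.trans hCD) hZ hlam.2.le ha hLinv hd
      (hGz ▸ hz) (hGw ▸ hw)
    rw [hGz, hGw] at hexp
    rw [one_div, inv_mul_eq_div, le_div_iff₀ (mul_pos hlam.1 hC)]
    linarith
  refine ⟨hmain, fun M z w hz hw => ?_⟩
  rw [← LinearIsometryEquiv.map_sub, LinearIsometryEquiv.norm_map]
  exact hmain z w hz hw

/-- The inverse `g⁻¹` of `g = L + (0, d z₁²)`, `L(z₁,z₂) = (a z₁, c z₁ + b z₂)`, is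
Lipschitz with constant `1/(λC)` on the ball `B(0,r_n)`; the same estimate holds for
`g ∘ M` with `M` unitary. -/
theorem inverse_lipschitz_estimate
    (C D k ε Z lam : ℝ) (n : ℕ) (a b c d : ℂ) (G : ℂ × ℂ → ℂ × ℂ)
    (hC : 0 < C) (hCD : C < D) (hD : D < 1)
    (hk2 : 2 < k) (hk : k < 11 / 5) (hDk : D ^ k < C)
    (hε : 0 < ε ∧ ε < min (min ((11 - 5 * k) / 4) ((5 - 2 * k) / 3)) ((3 - k) / 2))
    (hZ : 0 < Z) (hlam : 0 < lam ∧ lam < 1) (hDlam : D ^ k < lam * C)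
    (ha : C ≤ ‖a‖) (hb : C ≤ ‖b‖)
    -- `‖L⁻¹‖ ≤ 1/C`:
    (hLinv : ∀ z : ℂ × ℂ, ‖z‖ ≤ 1 / C * ‖((a * z.1, c * z.1 + b * z.2) : ℂ × ℂ)‖)
    (hd : ‖d‖ ≤ Z * D ^ (-(2 * (n : ℝ)) * (k - 2 + ε)))
    -- `G` is the inverse of `g`:
    (hG : Function.LeftInverse G (fun z : ℂ × ℂ => (a * z.1, c * z.1 + b * z.2 + d * z.1 ^ 2))
        ∧ Function.RightInverse G (fun z : ℂ × ℂ => (a * z.1, c * z.1 + b * z.2 + d * z.1 ^ 2))) :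
    (∀ z w : ℂ × ℂ, ‖z‖ < rSeq C D k ε Z lam n → ‖w‖ < rSeq C D k ε Z lam n →
      ‖G z - G w‖ ≤ 1 / (lam * C) * ‖z - w‖) ∧
    ∀ M : (ℂ × ℂ) ≃ₗᵢ[ℂ] (ℂ × ℂ), ∀ z w : ℂ × ℂ,
      ‖z‖ < rSeq C D k ε Z lam n → ‖w‖ < rSeq C D k ε Z lam n →
        ‖M.symm (G z) - M.symm (G w)‖ ≤ 1 / (lam * C) * ‖z - w‖ :=
  inverse_lipschitz_estimate_general C D k ε Z lam n a b c d G hC hCD hZ hlam ha hLinv hd hG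
end
end

section
/- Let 0<C<D<1, 2<k<11/5 with D^k<C, ε ∈ (0, min{(11−5k)/4, (5−2k)/3, (3−k)/2}), Z > 0, λ ∈ (0,1) with D^k < λC, and r_n = min{ (1−λ)C²D^{2n(k−2+ε)}/(2Z), D^{2n(k−2+ε)}/(48Z), D^{4n(k−2+ε)/(3−k)}/2 }. There exists a constant M depending only on C, D, Z, k, ε (not on n) with the following property. Let f be a holomorphic map on the unit ball of ℂ² with f(0)=0 and C‖z‖ ≤ ‖f(z)‖ ≤ D‖z‖; let h and h′ be maps of the form identity plus a homogeneous quadratic polynomial whose coefficients have modulus at most Z·D^{−2n(k−2+ε)} and Z·D^{−2(n+1)(k−2+ε)} respectively; let g(z,w) = (a z, b w + c z + d z²) with C ≤ |a|, |b| ≤ D, |c| ≤ D, |d| ≤ Z·D^{−2n(k−2+ε)}; and suppose the Taylor polynomials of degree 2 at 0 of h and of g^{−1}∘h′∘f coincide. Then ‖h(z) − g^{−1}∘h′∘f(z)‖ ≤ M·‖z‖^k for all z with ‖z‖ ≤ r_n. -/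
/-!
The difference `φ = h - g⁻¹ ∘ h' ∘ f` is analytic and, by the Taylor hypothesis, vanishes to
order three at `0`. On the ball of radius `R = D^{2n(k-2+ε)}` the coefficient bounds make every
quadratic correction at most a constant multiple of the linear part, so `‖φ‖ ≤ M R` there with `M`
independent of `n`. The Schwarz lemma for maps vanishing to order three then gives
`‖φ z‖ ≤ M ‖z‖³ / R²`, and `‖z‖ ≤ r_n ≤ R^{2/(3-k)} / 2` turns this into `‖φ z‖ ≤ M ‖z‖^k`.
-/

open Set Filter Metric Topology

noncomputable section

/-- The explicit inverse of `gMap a b c d` (for `a, b ≠ 0`). -/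
def gInv (a b c d : ℂ) (z : ℂ × ℂ) : ℂ × ℂ :=
  (a⁻¹ * z.1, b⁻¹ * (z.2 - c * (a⁻¹ * z.1) - d * (a⁻¹ * z.1) ^ 2))

open Asymptotics

theorem AnalyticAt.isBigO_norm_pow_of_iteratedFDeriv_eq_zero {𝕜 E F : Type*}
    [NontriviallyNormedField 𝕜] [CharZero 𝕜] [NormedAddCommGroup E] [NormedSpace 𝕜 E]
    [NormedAddCommGroup F] [NormedSpace 𝕜 F] [CompleteSpace F] {f : E → F} {x : E} {n : ℕ}
    (hf : AnalyticAt 𝕜 f x) (hvan : ∀ i < n, iteratedFDeriv 𝕜 i f x = 0) :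
    (fun y => f (x + y)) =O[𝓝 0] fun y => ‖y‖ ^ n := by
  obtain ⟨p, r, hp⟩ := hf
  have hpartial : ∀ y, p.partialSum n y = 0 := fun y =>
    Finset.sum_eq_zero fun i hi => by
      have h := hp.factorial_smul y i
      rw [hvan i (Finset.mem_range.1 hi), zero_apply, ← Nat.cast_smul_eq_nsmul 𝕜] at h
      exact (smul_eq_zero.1 h).resolve_left (Nat.cast_ne_zero.2 i.factorial_ne_zero)
  simpa [hpartial] using hp.hasFPowerSeriesAt.isBigO_sub_partialSum_pow n

theorem Complex.norm_le_mul_div_pow_of_iteratedFDeriv_eq_zero {E F : Type*}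
    [NormedAddCommGroup E] [NormedSpace ℂ E] [NormedAddCommGroup F] [NormedSpace ℂ F]
    [CompleteSpace F] {φ : E → F} {c z : E} {R B : ℝ} {n : ℕ}
    (hφ : AnalyticOnNhd ℂ φ (ball c R)) (hB : ∀ w ∈ ball c R, ‖φ w‖ ≤ B)
    (hvan : ∀ i ≤ n, iteratedFDeriv ℂ i φ c = 0) (hz : z ∈ ball c R) :
    ‖φ z‖ ≤ B * (dist z c / R) ^ (n + 1) := by
  have hc : φ c = 0 := by
    simpa using congrArg (fun L => L 0) (hvan 0 n.zero_le)
  have hmaps : MapsTo φ (ball c R) (closedBall (φ c) B) := fun w hw => by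
    simpa [hc] using hB w hw
  have hO : (fun y => φ (c + y)) =O[𝓝 0] fun y => ‖y‖ ^ (n + 1) :=
    (hφ c (mem_ball_self (nonempty_ball.1 ⟨z, hz⟩))).isBigO_norm_pow_of_iteratedFDeriv_eq_zero
      fun i hi => hvan i (Nat.lt_succ_iff.1 hi)
  have ho : (φ · - φ c) =o[𝓝 c] (fun w => ‖w - c‖ ^ n) := by
    have ht : Tendsto (fun w => w - c) (𝓝 c) (𝓝 0) := by
      simpa using (continuous_sub_right c).tendsto c
    simpa [hc, Function.comp_def] using
      (hO.trans_isLittleO (isLittleO_norm_pow_norm_pow n.lt_succ_self)).comp_tendsto ht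
  simpa [hc, dist_eq_norm] using
    dist_le_mul_div_pow_of_mapsTo_ball_of_isLittleO hφ.differentiableOn hmaps ho hz

theorem analyticAt_quadMap (cf : Fin 6 → ℂ) (z : ℂ × ℂ) : AnalyticAt ℂ (quadMap cf) z := by
  -- `fun_prop` knows no `AnalyticAt` rule for the projections, so they are supplied locally.
  have := analyticAt_fst (𝕜 := ℂ) (p := z)
  have := analyticAt_snd (𝕜 := ℂ) (p := z)
  unfold quadMap; fun_prop

theorem analyticAt_gInv (a b c d : ℂ) (z : ℂ × ℂ) : AnalyticAt ℂ (gInv a b c d) z := by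
  have := analyticAt_fst (𝕜 := ℂ) (p := z)
  have := analyticAt_snd (𝕜 := ℂ) (p := z)
  unfold gInv; fun_prop

theorem norm_quadMap_le {cf : Fin 6 → ℂ} {K : ℝ} (hK : ∀ i, ‖cf i‖ ≤ K) (z : ℂ × ℂ) :
    ‖quadMap cf z‖ ≤ 3 * K * ‖z‖ ^ 2 := by
  have hK0 : 0 ≤ K := (norm_nonneg _).trans (hK 0)
  have h₁ := norm_fst_le z
  have h₂ := norm_snd_le z
  have row : ∀ i j l : Fin 6,
      ‖cf i * z.1 ^ 2 + cf j * z.1 * z.2 + cf l * z.2 ^ 2‖ ≤ 3 * K * ‖z‖ ^ 2 := fun i j l =>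
    calc _ ≤ ‖cf i‖ * ‖z.1‖ ^ 2 + ‖cf j‖ * ‖z.1‖ * ‖z.2‖ + ‖cf l‖ * ‖z.2‖ ^ 2 := by
          refine norm_add₃_le.trans_eq ?_
          simp only [norm_mul, norm_pow]
      _ ≤ K * ‖z‖ ^ 2 + K * ‖z‖ * ‖z‖ + K * ‖z‖ ^ 2 := by gcongr <;> apply hK
      _ = 3 * K * ‖z‖ ^ 2 := by ring
  exact norm_prod_le_iff.2 ⟨row 0 1 2, row 3 4 5⟩

theorem norm_add_quadMap_le {cf : Fin 6 → ℂ} {K s : ℝ} (hK : ∀ i, ‖cf i‖ ≤ K) {z : ℂ × ℂ}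
    (hz : ‖z‖ ≤ s) : ‖z + quadMap cf z‖ ≤ s + 3 * K * s ^ 2 := by
  have hK0 : 0 ≤ K := (norm_nonneg _).trans (hK 0)
  calc ‖z + quadMap cf z‖ ≤ ‖z‖ + 3 * K * ‖z‖ ^ 2 :=
        norm_add_le_of_le le_rfl (norm_quadMap_le hK z)
    _ ≤ s + 3 * K * s ^ 2 := by gcongr

theorem norm_gInv_le {a b c d : ℂ} {u : ℂ × ℂ} {C s : ℝ} (hC : 0 < C) (ha : C ≤ ‖a‖)
    (hb : C ≤ ‖b‖) (hc : ‖c‖ ≤ 1) (hu : ‖u‖ ≤ s) :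
    ‖gInv a b c d u‖ ≤ C⁻¹ * (s + C⁻¹ * s + ‖d‖ * (C⁻¹ * s) ^ 2) := by
  have hs : 0 ≤ s := (norm_nonneg _).trans hu
  have ha' : ‖a⁻¹‖ ≤ C⁻¹ := by rw [norm_inv]; exact inv_anti₀ hC ha
  have hb' : ‖b⁻¹‖ ≤ C⁻¹ := by rw [norm_inv]; exact inv_anti₀ hC hb
  have hx : ‖a⁻¹ * u.1‖ ≤ C⁻¹ * s := by
    rw [norm_mul]; gcongr; exact (norm_fst_le u).trans hu
  have hy : ‖u.2 - c * (a⁻¹ * u.1) - d * (a⁻¹ * u.1) ^ 2‖ ≤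
      s + C⁻¹ * s + ‖d‖ * (C⁻¹ * s) ^ 2 :=
    calc _ ≤ ‖u.2‖ + ‖c‖ * ‖a⁻¹ * u.1‖ + ‖d‖ * ‖a⁻¹ * u.1‖ ^ 2 := by
          refine (norm_sub_le_of_le (norm_sub_le _ _) le_rfl).trans_eq ?_
          simp only [norm_mul, norm_pow]
      _ ≤ s + 1 * (C⁻¹ * s) + ‖d‖ * (C⁻¹ * s) ^ 2 := by
          gcongr
          exact (norm_snd_le u).trans hu
      _ = s + C⁻¹ * s + ‖d‖ * (C⁻¹ * s) ^ 2 := by ring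
  refine norm_prod_le_iff.2 ⟨hx.trans ?_, ?_⟩
  · gcongr
    nlinarith [norm_nonneg d, mul_nonneg (inv_nonneg.2 hC.le) hs]
  · rw [gInv, norm_mul]; gcongr

theorem norm_add_quadMap_sub_gInv_le {ch ch' : Fin 6 → ℂ} {a b c d : ℂ} {w v : ℂ × ℂ}
    {C D Z K K' R : ℝ} (hC : 0 < C) (hD : D ≤ 1) (hch : ∀ i, ‖ch i‖ ≤ K)
    (hch' : ∀ i, ‖ch' i‖ ≤ K') (hK' : K' * D ^ 2 ≤ K) (hKR : K * R ≤ Z) (ha : C ≤ ‖a‖)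
    (hb : C ≤ ‖b‖) (hc : ‖c‖ ≤ 1) (hd : ‖d‖ ≤ K) (hw : ‖w‖ ≤ R) (hv : ‖v‖ ≤ D * R) :
    ‖(w + quadMap ch w) - gInv a b c d (v + quadMap ch' v)‖ ≤
      (1 + 3 * Z) * (1 + C⁻¹ * (1 + C⁻¹ + Z * C⁻¹ ^ 2 * (1 + 3 * Z))) * R := by
  have hR : 0 ≤ R := (norm_nonneg _).trans hw
  have hdR : ‖d‖ * R ≤ Z := (mul_le_mul_of_nonneg_right hd hR).trans hKR
  have hh : ‖w + quadMap ch w‖ ≤ (1 + 3 * Z) * R :=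
    calc _ ≤ R + 3 * K * R ^ 2 := norm_add_quadMap_le hch hw
      _ = R + 3 * (K * R) * R := by ring
      _ ≤ (1 + 3 * Z) * R := by nlinarith
  have hh' : ‖v + quadMap ch' v‖ ≤ (1 + 3 * Z) * R :=
    calc _ ≤ D * R + 3 * K' * (D * R) ^ 2 := norm_add_quadMap_le hch' hv
      _ = D * R + 3 * (K' * D ^ 2) * R * R := by ring
      _ ≤ 1 * R + 3 * K * R * R := by
          have hK'0 : 0 ≤ K' := (norm_nonneg _).trans (hch' 0)
          gcongr
      _ ≤ (1 + 3 * Z) * R := by nlinarith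
  have hg : ‖gInv a b c d (v + quadMap ch' v)‖ ≤
      C⁻¹ * ((1 + 3 * Z) * R + C⁻¹ * ((1 + 3 * Z) * R)
        + Z * C⁻¹ ^ 2 * (1 + 3 * Z) ^ 2 * R) :=
    calc _ ≤ C⁻¹ * ((1 + 3 * Z) * R + C⁻¹ * ((1 + 3 * Z) * R)
          + (‖d‖ * R) * C⁻¹ ^ 2 * (1 + 3 * Z) ^ 2 * R) := by
          refine (norm_gInv_le hC ha hb hc hh').trans_eq ?_
          ring
      _ ≤ _ := by gcongr
  calc _ ≤ ‖w + quadMap ch w‖ + ‖gInv a b c d (v + quadMap ch' v)‖ := norm_sub_le _ _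
    _ ≤ (1 + 3 * Z) * R + C⁻¹ * ((1 + 3 * Z) * R + C⁻¹ * ((1 + 3 * Z) * R)
          + Z * C⁻¹ ^ 2 * (1 + 3 * Z) ^ 2 * R) := add_le_add hh hg
    _ = _ := by ring

theorem rpow_neg_mul_add_one_mul_sq_le {D T : ℝ} (hD0 : 0 < D) (hD1 : D ≤ 1) (hT : T ≤ 1)
    (x : ℝ) : D ^ (-(2 * (x + 1)) * T) * D ^ 2 ≤ D ^ (-(2 * x) * T) := by
  rw [← Real.rpow_add_natCast hD0.ne']
  exact Real.rpow_le_rpow_of_exponent_ge hD0 hD1 (by push_cast; linarith)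

theorem rSeq_le_rpow_div_two {C D k ε Z lam : ℝ} (hD : 0 < D) (n : ℕ) :
    rSeq C D k ε Z lam n ≤ (D ^ (2 * (n : ℝ) * (k - 2 + ε))) ^ (2 / (3 - k)) / 2 :=
  (min_le_right _ _).trans_eq (by rw [← Real.rpow_mul hD.le]; ring_nf)

theorem lt_of_le_rpow_div_two {R p x : ℝ} (hR0 : 0 < R) (hR1 : R ≤ 1) (hp : 1 ≤ p)
    (hx : x ≤ R ^ p / 2) : x < R :=
  calc x ≤ R ^ p / 2 := hx
    _ < R ^ p := half_lt_self (Real.rpow_pos_of_pos hR0 p)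
    _ ≤ R := Real.rpow_le_self_of_le_one hR0.le hR1 hp

theorem mul_div_pow_three_le_rpow {R x k : ℝ} (hR : 0 < R) (hx : 0 ≤ x) (hk : k < 3)
    (hxR : x ≤ R ^ (2 / (3 - k))) : R * (x / R) ^ 3 ≤ x ^ k := by
  have h3k : 0 < 3 - k := by linarith
  have hsq : x ^ (3 - k) ≤ R ^ 2 :=
    calc x ^ (3 - k) ≤ (R ^ (2 / (3 - k))) ^ (3 - k) := Real.rpow_le_rpow hx hxR h3k.le
      _ = R ^ 2 := by rw [← Real.rpow_mul hR.le, div_mul_cancel₀ _ h3k.ne', Real.rpow_two]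
  rcases hx.eq_or_lt with rfl | hx0
  · simpa using Real.rpow_nonneg le_rfl k
  have hsplit : x ^ 3 = x ^ k * x ^ (3 - k) := by
    rw [← Real.rpow_add hx0, add_sub_cancel, ← Real.rpow_natCast]
    norm_num
  calc R * (x / R) ^ 3 = x ^ k * x ^ (3 - k) / R ^ 2 := by rw [← hsplit]; field_simp
    _ ≤ x ^ k * R ^ 2 / R ^ 2 := by gcongr
    _ = x ^ k := by field_simp

theorem one_step_comparison_general
    (C D k ε Z lam : ℝ)
    (hC : 0 < C) (hCD : C < D) (hD : D < 1)
    (hk2 : 2 < k)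
    (hε : 0 < ε ∧ ε < min (min ((11 - 5 * k) / 4) ((5 - 2 * k) / 3)) ((3 - k) / 2))
    (hZ : 0 < Z) :
    ∃ M : ℝ, 0 < M ∧
      ∀ (n : ℕ) (f : ℂ × ℂ → ℂ × ℂ) (ch ch' : Fin 6 → ℂ) (a b c d : ℂ),
        AnalyticOn ℂ f (ball (0 : ℂ × ℂ) 1) → f 0 = 0 →
        (∀ z : ℂ × ℂ, ‖z‖ < 1 → C * ‖z‖ ≤ ‖f z‖ ∧ ‖f z‖ ≤ D * ‖z‖) →
        (∀ i, ‖ch i‖ ≤ Z * D ^ (-(2 * (n : ℝ)) * (k - 2 + ε))) →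
        (∀ i, ‖ch' i‖ ≤ Z * D ^ (-(2 * ((n : ℝ) + 1)) * (k - 2 + ε))) →
        C ≤ ‖a‖ → ‖a‖ ≤ D →
        C ≤ ‖b‖ → ‖b‖ ≤ D → ‖c‖ ≤ D →
        ‖d‖ ≤ Z * D ^ (-(2 * (n : ℝ)) * (k - 2 + ε)) →
        (∀ i : ℕ, i ≤ 2 →
          iteratedFDeriv ℂ i (fun z => z + quadMap ch z) 0 =
            iteratedFDeriv ℂ i
              (fun z => gInv a b c d (f z + quadMap ch' (f z))) 0) →
        ∀ z : ℂ × ℂ, ‖z‖ ≤ rSeq C D k ε Z lam n →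
          ‖(z + quadMap ch z) - gInv a b c d (f z + quadMap ch' (f z))‖
            ≤ M * ‖z‖ ^ k := by
  have hD0 : 0 < D := hC.trans hCD
  have hε3 : ε < (3 - k) / 2 := hε.2.trans_le (min_le_right _ _)
  have hk3 : k < 3 := by linarith [hε.1]
  have hT0 : 0 ≤ k - 2 + ε := by linarith [hε.1]
  have hT1 : k - 2 + ε ≤ 1 := by linarith
  refine ⟨(1 + 3 * Z) * (1 + C⁻¹ * (1 + C⁻¹ + Z * C⁻¹ ^ 2 * (1 + 3 * Z))), by positivity, ?_⟩
  intro n f ch ch' a b c d hfA _ hfb hch hch' haC _ hbC _ hcD hdZ htay z hz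
  set M := (1 + 3 * Z) * (1 + C⁻¹ * (1 + C⁻¹ + Z * C⁻¹ ^ 2 * (1 + 3 * Z)))
  set R := D ^ (2 * (n : ℝ) * (k - 2 + ε))
  have hR0 : 0 < R := Real.rpow_pos_of_pos hD0 _
  have hR1 : R ≤ 1 := Real.rpow_le_one hD0.le hD.le (by positivity)
  have hrSeq : rSeq C D k ε Z lam n ≤ R ^ (2 / (3 - k)) / 2 := rSeq_le_rpow_div_two hD0 n
  have hzR : ‖z‖ < R :=
    lt_of_le_rpow_div_two hR0 hR1 (by rw [le_div_iff₀ (by linarith)]; linarith) (hz.trans hrSeq)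
  have hf : AnalyticOnNhd ℂ f (ball 0 1) := isOpen_ball.analyticOn_iff_analyticOnNhd.1 hfA
  have hH : ∀ w, AnalyticAt ℂ (fun w => w + quadMap ch w) w := fun w =>
    analyticAt_id.add (analyticAt_quadMap ch w)
  have hG : AnalyticOnNhd ℂ (fun w => gInv a b c d (f w + quadMap ch' (f w))) (ball 0 1) :=
    fun w hw => (analyticAt_gInv a b c d _).comp
      ((hf w hw).add ((analyticAt_quadMap ch' _).comp (hf w hw)))
  set φ : ℂ × ℂ → ℂ × ℂ := fun w => (w + quadMap ch w) - gInv a b c d (f w + quadMap ch' (f w))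
  have hφ : AnalyticOnNhd ℂ φ (ball 0 1) := fun w hw => (hH w).sub (hG w hw)
  have hvan : ∀ i ≤ 2, iteratedFDeriv ℂ i φ 0 = 0 := fun i hi =>
    (iteratedFDeriv_sub_apply (hH 0).contDiffAt (hG 0 (mem_ball_self one_pos)).contDiffAt).trans
      (by rw [htay i hi, sub_self])
  have hbound : ∀ w ∈ ball (0 : ℂ × ℂ) R, ‖φ w‖ ≤ M * R := fun w hw => by
    have hwR := mem_ball_zero_iff.1 hw
    exact norm_add_quadMap_sub_gInv_le hC hD.le hch hch'
      (by rw [mul_assoc]; gcongr; exact rpow_neg_mul_add_one_mul_sq_le hD0 hD.le hT1 n)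
      (by rw [mul_assoc, neg_mul, Real.rpow_neg hD0.le, inv_mul_cancel₀ hR0.ne', mul_one])
      haC hbC (hcD.trans hD.le) hdZ hwR.le ((hfb w (hwR.trans_le hR1)).2.trans (by gcongr))
  calc ‖φ z‖ ≤ M * R * (dist z 0 / R) ^ 3 :=
        Complex.norm_le_mul_div_pow_of_iteratedFDeriv_eq_zero
          (hφ.mono (ball_subset_ball hR1)) hbound hvan (mem_ball_zero_iff.2 hzR)
    _ = M * (R * (‖z‖ / R) ^ 3) := by rw [dist_zero_right, mul_assoc]
    _ ≤ M * ‖z‖ ^ k := by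
        gcongr
        exact mul_div_pow_three_le_rpow hR0 (norm_nonneg z) hk3
          (hz.trans (hrSeq.trans (half_le_self (Real.rpow_nonneg hR0.le _))))

/-- One-step comparison: there is a constant `M = M(C,D,Z,k,ε)` such that whenever the
degree-2 Taylor polynomials of `h` and `g⁻¹∘h′∘f` at `0` coincide (with the stated
bounds on `f`, `g`, `h`, `h′`), one has `‖h(z) − g⁻¹∘h′∘f(z)‖ ≤ M‖z‖^k` on `B(0,rₙ)`. -/
theorem one_step_comparison
    (C D k ε Z lam : ℝ)
    (hC : 0 < C) (hCD : C < D) (hD : D < 1)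
    (hk2 : 2 < k) (hk : k < 11 / 5) (hDk : D ^ k < C)
    (hε : 0 < ε ∧ ε < min (min ((11 - 5 * k) / 4) ((5 - 2 * k) / 3)) ((3 - k) / 2))
    (hZ : 0 < Z) (hlam : 0 < lam ∧ lam < 1) (hDlam : D ^ k < lam * C) :
    ∃ M : ℝ, 0 < M ∧
      ∀ (n : ℕ) (f : ℂ × ℂ → ℂ × ℂ) (ch ch' : Fin 6 → ℂ) (a b c d : ℂ),
        AnalyticOn ℂ f (ball (0 : ℂ × ℂ) 1) → f 0 = 0 →
        (∀ z : ℂ × ℂ, ‖z‖ < 1 → C * ‖z‖ ≤ ‖f z‖ ∧ ‖f z‖ ≤ D * ‖z‖) →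
        (∀ i, ‖ch i‖ ≤ Z * D ^ (-(2 * (n : ℝ)) * (k - 2 + ε))) →
        (∀ i, ‖ch' i‖ ≤ Z * D ^ (-(2 * ((n : ℝ) + 1)) * (k - 2 + ε))) →
        C ≤ ‖a‖ → ‖a‖ ≤ D →
        C ≤ ‖b‖ → ‖b‖ ≤ D → ‖c‖ ≤ D →
        ‖d‖ ≤ Z * D ^ (-(2 * (n : ℝ)) * (k - 2 + ε)) →
        (∀ i : ℕ, i ≤ 2 →
          iteratedFDeriv ℂ i (fun z => z + quadMap ch z) 0 =
            iteratedFDeriv ℂ i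
              (fun z => gInv a b c d (f z + quadMap ch' (f z))) 0) →
        ∀ z : ℂ × ℂ, ‖z‖ ≤ rSeq C D k ε Z lam n →
          ‖(z + quadMap ch z) - gInv a b c d (f z + quadMap ch' (f z))‖
            ≤ M * ‖z‖ ^ k :=
  one_step_comparison_general C D k ε Z lam hC hCD hD hk2 hε hZ
end
end
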